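/- Let $k$ be a field of characteristic zero, $S' = k[x, y, w]$, and $I' = (x y^2, y^3)$. Then the degree-zero graded piece of $\mathrm{Hom}_{S'}(I'/I'^2, S'/I')$ has dimension $7$ over $k$. -/

import Mathlib

open MvPolynomial

/-- The degree-zero part of `Hom_{S'}(I', S'/I')` (identified with
`Hom_{S'}(I'/I'², S'/I')`, since any `S'`-linear map `I' → S'/I'` kills `I'²`). -/
def degreeZeroHoms (k : Type*) [Field k] (σ : Type*)
    (I : Ideal (MvPolynomial σ k)) :
    Submodule k ((↥I) →ₗ[MvPolynomial σ k] (MvPolynomial σ k ⧸ I)) where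
  carrier := {φ | ∀ (m : ℕ) (p : MvPolynomial σ k) (hp : p ∈ I),
      p ∈ homogeneousSubmodule σ k m →
      φ ⟨p, hp⟩ ∈ (homogeneousSubmodule σ k m).map (Ideal.Quotient.mkₐ k I).toLinearMap}
  add_mem' := by
    intro a b ha hb m p hp hhom
    simpa using add_mem (ha m p hp hhom) (hb m p hp hhom)
  zero_mem' := by
    intro m p hp hhom
    simp
  smul_mem' := by
    intro c a ha m p hp hhom
    simpa using Submodule.smul_mem _ c (ha m p hp hhom)

/-!
A degree-zero `φ : I → S/I` is determined by `u = φ(xy²)` and `v = φ(y³)`, classes of cubics,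
and since the syzygies of `(xy², y³)` are generated by `(y, -x)`, every pair with `y u = x v` in
`S/I` occurs. As `I` is a monomial ideal, membership in `I` is read off the coefficients at the
eight standard cubics; the relation `y u ≡ x v` in degree four leaves seven of these sixteen
coefficients free: `u = x q + y (a₁ x² + a₃ x w + a₅ y w)` and `v = y q + a₆ y² w` with
`q = a₀ x² + a₂ x w + a₄ w²`.
-/

namespace MvPolynomial

variable {σ R : Type*} [CommSemiring R]

theorem homogeneousComponent_mul_of_isHomogeneous {f : MvPolynomial σ R} {d : ℕ}
    (hf : f.IsHomogeneous d) (s : MvPolynomial σ R) (n : ℕ) :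
    homogeneousComponent n (s * f) = if d ≤ n then homogeneousComponent (n - d) s * f else 0 := by
  classical
  let := gradedAlgebra (σ := σ) (R := R)
  have hdec (p : MvPolynomial σ R) (i : ℕ) :
      (DirectSum.decompose (homogeneousSubmodule σ R) p i : MvPolynomial σ R) =
        homogeneousComponent i p :=
    decomposition.decompose'_apply p i
  simpa only [hdec] using DirectSum.coe_decompose_mul_of_right_mem
    (homogeneousSubmodule σ R) n (a := s) ((mem_homogeneousSubmodule d f).mpr hf)

theorem mem_ideal_span_monomial_image_iff_coeff {x : MvPolynomial σ R} {s : Set (σ →₀ ℕ)} :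
    x ∈ Ideal.span ((fun s => monomial s (1 : R)) '' s) ↔
      ∀ μ, (∀ ν ∈ s, ¬ ν ≤ μ) → coeff μ x = 0 := by
  rw [mem_ideal_span_monomial_image]
  refine forall_congr' fun μ => ?_
  rw [mem_support_iff, ← not_imp_not]
  push Not
  rfl

end MvPolynomial

namespace Ideal

variable {R M : Type*} [CommRing R] [AddCommGroup M] [Module R M]

theorem left_mem_span_pair (f g : R) : f ∈ span {f, g} :=
  subset_span (Set.mem_insert f {g})

theorem right_mem_span_pair (f g : R) : g ∈ span {f, g} :=
  subset_span (Set.mem_insert_of_mem f rfl)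

theorem linearMap_ext_span_pair {f g : R} {φ ψ : span {f, g} →ₗ[R] M}
    (hf : φ ⟨f, left_mem_span_pair f g⟩ = ψ ⟨f, left_mem_span_pair f g⟩)
    (hg : φ ⟨g, right_mem_span_pair f g⟩ = ψ ⟨g, right_mem_span_pair f g⟩) : φ = ψ := by
  ext ⟨p, hp⟩
  obtain ⟨s, t, rfl⟩ := mem_span_pair.mp hp
  have hdecomp : (⟨s * f + t * g, hp⟩ : span {f, g}) =
      s • ⟨f, left_mem_span_pair f g⟩ + t • ⟨g, right_mem_span_pair f g⟩ := rfl
  simp only [hdecomp, map_add, map_smul, hf, hg]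

def spanPairCover (f g : R) : (R × R) →ₗ[R] span {f, g} :=
  LinearMap.codRestrict _
    ((LinearMap.toSpanSingleton R R f).coprod (LinearMap.toSpanSingleton R R g))
    fun z => mem_span_pair.mpr ⟨z.1, z.2, by simp [smul_eq_mul]⟩

theorem spanPairCover_surjective (f g : R) : Function.Surjective (spanPairCover f g) := by
  rintro ⟨p, hp⟩
  obtain ⟨s, t, rfl⟩ := mem_span_pair.mp hp
  exact ⟨(s, t), Subtype.ext (by simp [spanPairCover, smul_eq_mul])⟩

noncomputable def liftSpanPair (f g : R) (u v : M)
    (h : ∀ s t : R, s * f + t * g = 0 → s • u + t • v = 0) : span {f, g} →ₗ[R] M :=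
  (LinearMap.ker (spanPairCover f g)).liftQ ((LinearMap.toSpanSingleton R M u).coprod
      (LinearMap.toSpanSingleton R M v))
      (fun z hz => LinearMap.mem_ker.mpr <| h z.1 z.2 <| by
        simpa [spanPairCover, smul_eq_mul] using congr_arg Subtype.val hz) ∘ₗ
    ((spanPairCover f g).quotKerEquivOfSurjective (spanPairCover_surjective f g)).symm.toLinearMap

theorem liftSpanPair_apply {f g : R} {u v : M}
    (h : ∀ s t : R, s * f + t * g = 0 → s • u + t • v = 0) (s t : R)
    (hmem : s * f + t * g ∈ span {f, g}) :
    liftSpanPair f g u v h ⟨s * f + t * g, hmem⟩ = s • u + t • v := by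
  have : (⟨s * f + t * g, hmem⟩ : span {f, g}) = spanPairCover f g (s, t) :=
    Subtype.ext (by simp [spanPairCover, smul_eq_mul])
  have hsymm : ((spanPairCover f g).quotKerEquivOfSurjective (spanPairCover_surjective f g)).symm
      (spanPairCover f g (s, t)) = Submodule.Quotient.mk (s, t) :=
    (LinearEquiv.symm_apply_eq _).mpr rfl
  rw [this, liftSpanPair, LinearMap.comp_apply, LinearEquiv.coe_coe, hsymm]
  simp

theorem liftSpanPair_left {f g : R} {u v : M}
    (h : ∀ s t : R, s * f + t * g = 0 → s • u + t • v = 0) :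
    liftSpanPair f g u v h ⟨f, left_mem_span_pair f g⟩ = u := by
  simpa using liftSpanPair_apply h 1 0 (by simpa using left_mem_span_pair f g)

theorem liftSpanPair_right {f g : R} {u v : M}
    (h : ∀ s t : R, s * f + t * g = 0 → s • u + t • v = 0) :
    liftSpanPair f g u v h ⟨g, right_mem_span_pair f g⟩ = v := by
  simpa using liftSpanPair_apply h 0 1 (by simpa using right_mem_span_pair f g)

end Ideal

theorem mem_degreeZeroHoms_of_span_pair {k σ : Type*} [Field k] {f g : MvPolynomial σ k} {d : ℕ}
    (hf : f.IsHomogeneous d) (hg : g.IsHomogeneous d)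
    (φ : Ideal.span {f, g} →ₗ[MvPolynomial σ k] MvPolynomial σ k ⧸ Ideal.span {f, g})
    {u v : MvPolynomial σ k} (hu : u.IsHomogeneous d) (hv : v.IsHomogeneous d)
    (hφf : φ ⟨f, Ideal.left_mem_span_pair f g⟩ = Ideal.Quotient.mk _ u)
    (hφg : φ ⟨g, Ideal.right_mem_span_pair f g⟩ = Ideal.Quotient.mk _ v) :
    φ ∈ degreeZeroHoms k σ (Ideal.span {f, g}) := by
  intro m p hp hpm
  obtain ⟨s, t, rfl⟩ := Ideal.mem_span_pair.mp hp
  have hcomp := homogeneousComponent_eq_self hpm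
  rw [map_add, homogeneousComponent_mul_of_isHomogeneous hf,
    homogeneousComponent_mul_of_isHomogeneous hg] at hcomp
  split_ifs at hcomp with hdm
  · set s' := homogeneousComponent (m - d) s
    set t' := homogeneousComponent (m - d) t
    have hdecomp : (⟨s * f + t * g, hp⟩ : Ideal.span {f, g}) =
        s' • ⟨f, Ideal.left_mem_span_pair f g⟩ +
          t' • ⟨g, Ideal.right_mem_span_pair f g⟩ :=
      Subtype.ext hcomp.symm
    have hdeg : m - d + d = m := Nat.sub_add_cancel hdm
    refine ⟨s' * u + t' * v, ?_, ?_⟩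
    · rw [SetLike.mem_coe, mem_homogeneousSubmodule, ← hdeg]
      exact ((homogeneousComponent_isHomogeneous _ s).mul hu).add
        ((homogeneousComponent_isHomogeneous _ t).mul hv)
    · rw [hdecomp, LinearMap.map_add φ, LinearMap.map_smul, LinearMap.map_smul, hφf, hφg]
      rfl
  · have hzero : (⟨s * f + t * g, hp⟩ : Ideal.span {f, g}) = 0 :=
      Subtype.ext (by simpa using hcomp.symm)
    rw [hzero, map_zero]
    exact Submodule.zero_mem _

theorem Prime.exists_eq_of_mul_add_mul_eq_zero {R : Type*} [CommRing R] [NoZeroDivisors R]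
    {p b s t : R} (hp : Prime p) (hpb : ¬p ∣ b) (h : s * p + t * b = 0) :
    ∃ c, s = -(c * b) ∧ t = c * p := by
  obtain ⟨c, rfl⟩ : p ∣ t :=
    (hp.dvd_mul.mp ⟨-s, by linear_combination h⟩).resolve_right hpb
  refine ⟨c, ?_, mul_comm p c⟩
  have : p * (s + c * b) = 0 := by linear_combination h
  linear_combination (mul_eq_zero.mp this).resolve_left hp.ne_zero

namespace PlanarDoubleLine

variable {k : Type*} [Field k]

local notation "S" => MvPolynomial (Fin 3) k

local notation "I" => Ideal.span ({X 0 * X 1 ^ 2, X 1 ^ 3} : Set S)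

noncomputable def expVec (a b c : ℕ) : Fin 3 →₀ ℕ :=
  Finsupp.equivFunOnFinite.symm ![a, b, c]

section expVec

variable {a b c a' b' c' : ℕ}

@[simp] theorem expVec_apply_zero : expVec a b c 0 = a := rfl
@[simp] theorem expVec_apply_one : expVec a b c 1 = b := rfl
@[simp] theorem expVec_apply_two : expVec a b c 2 = c := rfl

theorem eq_expVec (μ : Fin 3 →₀ ℕ) : μ = expVec (μ 0) (μ 1) (μ 2) := by
  ext i; fin_cases i <;> rfl

@[simp] theorem expVec_inj : expVec a b c = expVec a' b' c' ↔ a = a' ∧ b = b' ∧ c = c' := by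
  refine ⟨fun h => ⟨congr($h 0), congr($h 1), congr($h 2)⟩, ?_⟩
  rintro ⟨rfl, rfl, rfl⟩
  rfl

@[simp] theorem expVec_le_expVec :
    expVec a b c ≤ expVec a' b' c' ↔ a ≤ a' ∧ b ≤ b' ∧ c ≤ c' := by
  simp [Finsupp.le_def, Fin.forall_fin_succ]

@[simp] theorem degree_expVec : (expVec a b c).degree = a + b + c := by
  simp [Finsupp.degree_eq_sum, Fin.sum_univ_three]

theorem expVec_eq_sum_single :
    expVec a b c = Finsupp.single 0 a + Finsupp.single 1 b + Finsupp.single 2 c := by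
  ext i; fin_cases i <;> simp

theorem monomial_expVec (r : k) :
    monomial (expVec a b c) r = C r * X 0 ^ a * X 1 ^ b * X 2 ^ c := by
  simp only [X_pow_eq_monomial, C_mul_monomial, monomial_mul, mul_one, expVec_eq_sum_single]

theorem coeff_expVec_X_zero_mul (p : S) :
    coeff (expVec a b c) (X 0 * p) = if a = 0 then 0 else coeff (expVec (a - 1) b c) p := by
  by_cases ha : a = 0
  · simp [coeff_X_mul', ha]
  · rw [coeff_X_mul', if_pos (by simpa using ha), if_neg ha]
    congr 1
    ext i; fin_cases i <;> simp

theorem coeff_expVec_X_one_mul (p : S) :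
    coeff (expVec a b c) (X 1 * p) = if b = 0 then 0 else coeff (expVec a (b - 1) c) p := by
  by_cases hb : b = 0
  · simp [coeff_X_mul', hb]
  · rw [coeff_X_mul', if_pos (by simpa using hb), if_neg hb]
    congr 1
    ext i; fin_cases i <;> simp

end expVec

theorem ideal_eq_span_monomial :
    I = Ideal.span ((fun s => monomial s (1 : k)) '' {expVec 1 2 0, expVec 0 3 0}) := by
  simp [Set.image_pair, monomial_expVec]

theorem mem_ideal_iff {p : S} :
    p ∈ I ↔ ∀ a b c, ¬(1 ≤ a ∧ 2 ≤ b) → b < 3 → coeff (expVec a b c) p = 0 := by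
  rw [ideal_eq_span_monomial, mem_ideal_span_monomial_image_iff_coeff]
  constructor
  · intro h a b c h12 h3
    exact h _ (by simp; omega)
  · intro h μ hμ
    rw [eq_expVec μ] at hμ ⊢
    simp only [Set.mem_insert_iff, Set.mem_singleton_iff, forall_eq_or_imp, forall_eq,
      expVec_le_expVec] at hμ
    exact h _ _ _ (by omega) (by omega)

theorem mem_ideal_of_isHomogeneous {p : S} (hp : p.IsHomogeneous 3)
    (h : coeff (expVec 3 0 0) p = 0 ∧ coeff (expVec 2 1 0) p = 0 ∧
      coeff (expVec 2 0 1) p = 0 ∧ coeff (expVec 1 1 1) p = 0 ∧ coeff (expVec 1 0 2) p = 0 ∧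
      coeff (expVec 0 2 1) p = 0 ∧ coeff (expVec 0 1 2) p = 0 ∧ coeff (expVec 0 0 3) p = 0) :
    p ∈ I := by
  refine mem_ideal_iff.mpr fun a b c h12 h3 => ?_
  by_cases hdeg : a + b + c = 3
  · obtain rfl : c = 3 - a - b := by omega
    have ha : a ≤ 3 := by omega
    interval_cases a <;> interval_cases b <;> simp_all
  · exact hp.coeff_eq_zero (by simpa using hdeg)

theorem exists_of_syzygy {s t : S} (h : s * (X 0 * X 1 ^ 2) + t * X 1 ^ 3 = 0) :
    ∃ c, s = -(c * X 1) ∧ t = c * X 0 := by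
  have hX : ¬(X 0 : S) ∣ X 1 := fun h => by simpa using (X_dvd_X (R := k)).mp h
  refine X_prime.exists_eq_of_mul_add_mul_eq_zero hX ?_
  have : X 1 ^ 2 * (s * X 0 + t * X 1) = 0 := by linear_combination h
  exact (mul_eq_zero.mp this).resolve_left (pow_ne_zero _ (X_ne_zero 1))

theorem smul_add_smul_eq_zero_of_syzygy {u v : S ⧸ I} (huv : (X 1 : S) • u = (X 0 : S) • v)
    (s t : S) (h : s * (X 0 * X 1 ^ 2) + t * X 1 ^ 3 = 0) : s • u + t • v = 0 := by
  obtain ⟨c, rfl, rfl⟩ := exists_of_syzygy h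
  rw [neg_smul, mul_smul, mul_smul, huv, neg_add_cancel]

theorem smul_mk_eq_smul_mk_iff {u v : S} :
    (X 1 : S) • Ideal.Quotient.mk I u = (X 0 : S) • Ideal.Quotient.mk I v ↔
      X 1 * u - X 0 * v ∈ I :=
  Ideal.Quotient.mk_eq_mk_iff_sub_mem _ _

variable (k) in
noncomputable def valXY2 : (Fin 7 → k) →ₗ[k] S where
  toFun a := monomial (expVec 3 0 0) (a 0) + monomial (expVec 2 1 0) (a 1) +
    monomial (expVec 2 0 1) (a 2) + monomial (expVec 1 1 1) (a 3) +
    monomial (expVec 1 0 2) (a 4) + monomial (expVec 0 2 1) (a 5)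
  map_add' a b := by simp only [Pi.add_apply, map_add]; ring
  map_smul' c a := by simp only [Pi.smul_apply, ← smul_monomial, RingHom.id_apply, smul_add]

variable (k) in
noncomputable def valY3 : (Fin 7 → k) →ₗ[k] S where
  toFun a := monomial (expVec 2 1 0) (a 0) + monomial (expVec 1 1 1) (a 2) +
    monomial (expVec 0 1 2) (a 4) + monomial (expVec 0 2 1) (a 6)
  map_add' a b := by simp only [Pi.add_apply, map_add]; ring
  map_smul' c a := by simp only [Pi.smul_apply, ← smul_monomial, RingHom.id_apply, smul_add]

theorem isHomogeneous_valXY2 (a : Fin 7 → k) : (valXY2 k a).IsHomogeneous 3 := by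
  simp only [valXY2, LinearMap.coe_mk, AddHom.coe_mk]
  apply_rules [IsHomogeneous.add, isHomogeneous_monomial] <;> simp

theorem isHomogeneous_valY3 (a : Fin 7 → k) : (valY3 k a).IsHomogeneous 3 := by
  simp only [valY3, LinearMap.coe_mk, AddHom.coe_mk]
  apply_rules [IsHomogeneous.add, isHomogeneous_monomial] <;> simp

theorem X_one_mul_valXY2_sub_mem (a : Fin 7 → k) : X 1 * valXY2 k a - X 0 * valY3 k a ∈ I := by
  refine Ideal.mem_span_pair.mpr ⟨C (a 1) * X 0 + (C (a 3) - C (a 6)) * X 2, C (a 5) * X 2, ?_⟩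
  simp only [valXY2, valY3, LinearMap.coe_mk, AddHom.coe_mk, monomial_expVec]
  ring

noncomputable def coords (u v : S) : Fin 7 → k :=
  ![coeff (expVec 3 0 0) u, coeff (expVec 2 1 0) u, coeff (expVec 2 0 1) u,
    coeff (expVec 1 1 1) u, coeff (expVec 1 0 2) u, coeff (expVec 0 2 1) u,
    coeff (expVec 0 2 1) v]

theorem coords_val (a : Fin 7 → k) : coords (valXY2 k a) (valY3 k a) = a := by
  ext i
  fin_cases i <;> simp [coords, valXY2, valY3, coeff_monomial]

theorem coords_sub (u v u' v' : S) : coords (u - u') (v - v') = coords u v - coords u' v' := by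
  ext i
  fin_cases i <;> simp [coords]

theorem coords_eq_zero_of_mem {u v : S} (hu : u ∈ I) (hv : v ∈ I) : coords u v = 0 := by
  ext i
  fin_cases i <;> simp only [coords] <;>
    first
    | exact mem_ideal_iff.mp hu _ _ _ (by omega) (by omega)
    | exact mem_ideal_iff.mp hv _ _ _ (by omega) (by omega)

theorem coeff_relations {u v : S} (hr : X 1 * u - X 0 * v ∈ I) :
    coeff (expVec 0 1 2) u = 0 ∧ coeff (expVec 0 0 3) u = 0 ∧ coeff (expVec 3 0 0) v = 0 ∧
      coeff (expVec 2 1 0) v = coeff (expVec 3 0 0) u ∧ coeff (expVec 2 0 1) v = 0 ∧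
      coeff (expVec 1 1 1) v = coeff (expVec 2 0 1) u ∧ coeff (expVec 1 0 2) v = 0 ∧
      coeff (expVec 0 1 2) v = coeff (expVec 1 0 2) u ∧ coeff (expVec 0 0 3) v = 0 := by
  have r := mem_ideal_iff.mp hr
  simp only [coeff_sub, coeff_expVec_X_zero_mul, coeff_expVec_X_one_mul] at r
  refine ⟨?_, ?_, ?_, ?_, ?_, ?_, ?_, ?_, ?_⟩
  · simpa using r 0 2 2
  · simpa using r 0 1 3
  · simpa using r 4 0 0
  · exact (sub_eq_zero.mp (by simpa using r 3 1 0)).symm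
  · simpa using r 3 0 1
  · exact (sub_eq_zero.mp (by simpa using r 2 1 1)).symm
  · simpa using r 2 0 2
  · exact (sub_eq_zero.mp (by simpa using r 1 1 2)).symm
  · simpa using r 1 0 3

theorem mem_ideal_of_coords_eq_zero {u v : S} (hu : u.IsHomogeneous 3) (hv : v.IsHomogeneous 3)
    (hr : X 1 * u - X 0 * v ∈ I) (hc : coords u v = 0) : u ∈ I ∧ v ∈ I := by
  obtain ⟨r1, r2, r3, r4, r5, r6, r7, r8, r9⟩ := coeff_relations hr
  obtain ⟨c0, c1, c2, c3, c4, c5, c6⟩ :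
      coeff (expVec 3 0 0) u = 0 ∧ coeff (expVec 2 1 0) u = 0 ∧ coeff (expVec 2 0 1) u = 0 ∧
        coeff (expVec 1 1 1) u = 0 ∧ coeff (expVec 1 0 2) u = 0 ∧
        coeff (expVec 0 2 1) u = 0 ∧ coeff (expVec 0 2 1) v = 0 := by
    simpa [coords, funext_iff, Fin.forall_fin_succ] using hc
  exact ⟨mem_ideal_of_isHomogeneous hu ⟨c0, c1, c2, c3, c4, c5, r1, r2⟩,
    mem_ideal_of_isHomogeneous hv ⟨r3, r4.trans c0, r5, r6.trans c2, r7, c6, r8.trans c4, r9⟩⟩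

theorem isHomogeneous_X_zero_mul_X_one_sq : (X 0 * X 1 ^ 2 : S).IsHomogeneous 3 :=
  (isHomogeneous_X k 0).mul ((isHomogeneous_X k 1).pow 2)

theorem isHomogeneous_X_one_pow_three : (X 1 ^ 3 : S).IsHomogeneous 3 := by
  simpa using (isHomogeneous_X k 1).pow 3

theorem exists_homogeneous_values {φ : I →ₗ[S] S ⧸ I}
    (hφ : φ ∈ degreeZeroHoms k (Fin 3) I) :
    ∃ u v : S, u.IsHomogeneous 3 ∧ v.IsHomogeneous 3 ∧ X 1 * u - X 0 * v ∈ I ∧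
      φ ⟨_, Ideal.left_mem_span_pair _ _⟩ = Ideal.Quotient.mk I u ∧
      φ ⟨_, Ideal.right_mem_span_pair _ _⟩ = Ideal.Quotient.mk I v := by
  obtain ⟨u, hu, hφu⟩ :=
    hφ 3 _ (Ideal.left_mem_span_pair _ _) isHomogeneous_X_zero_mul_X_one_sq
  obtain ⟨v, hv, hφv⟩ := hφ 3 _ (Ideal.right_mem_span_pair _ _) isHomogeneous_X_one_pow_three
  refine ⟨u, v, hu, hv, smul_mk_eq_smul_mk_iff.mp ?_, hφu.symm, hφv.symm⟩
  have hgen : (X 1 : S) • (⟨_, Ideal.left_mem_span_pair _ _⟩ : I) =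
      (X 0 : S) • ⟨_, Ideal.right_mem_span_pair _ _⟩ :=
    Subtype.ext (by simp only [SetLike.mk_smul_mk, smul_eq_mul]; ring)
  change (X 1 : S) • (Ideal.Quotient.mkₐ k I).toLinearMap u =
    (X 0 : S) • (Ideal.Quotient.mkₐ k I).toLinearMap v
  rw [hφu, hφv, ← map_smul, ← map_smul, hgen]

variable (k) in
noncomputable def homOfCoords : (Fin 7 → k) →ₗ[k] degreeZeroHoms k (Fin 3) I where
  toFun a :=
    ⟨Ideal.liftSpanPair _ _ (Ideal.Quotient.mk I (valXY2 k a)) (Ideal.Quotient.mk I (valY3 k a))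
        (smul_add_smul_eq_zero_of_syzygy
          (smul_mk_eq_smul_mk_iff.mpr (X_one_mul_valXY2_sub_mem a))),
      mem_degreeZeroHoms_of_span_pair isHomogeneous_X_zero_mul_X_one_sq
        isHomogeneous_X_one_pow_three _ (isHomogeneous_valXY2 a) (isHomogeneous_valY3 a)
        (Ideal.liftSpanPair_left _) (Ideal.liftSpanPair_right _)⟩
  map_add' a b := Subtype.ext <| Ideal.linearMap_ext_span_pair
    (by simp [Ideal.liftSpanPair_left]) (by simp [Ideal.liftSpanPair_right])
  map_smul' c a := Subtype.ext <| Ideal.linearMap_ext_span_pair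
    (by
      simp only [map_smul, Ideal.liftSpanPair_left, SetLike.mk_smul_mk, LinearMap.smul_apply]
      exact map_smul (Ideal.Quotient.mkₐ k I) c (valXY2 k a))
    (by
      simp only [map_smul, Ideal.liftSpanPair_right, SetLike.mk_smul_mk, LinearMap.smul_apply]
      exact map_smul (Ideal.Quotient.mkₐ k I) c (valY3 k a))

theorem homOfCoords_apply_left (a : Fin 7 → k) :
    (homOfCoords k a : I →ₗ[S] S ⧸ I) ⟨_, Ideal.left_mem_span_pair _ _⟩ =
      Ideal.Quotient.mk I (valXY2 k a) := by
  simp [homOfCoords, Ideal.liftSpanPair_left]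

theorem homOfCoords_apply_right (a : Fin 7 → k) :
    (homOfCoords k a : I →ₗ[S] S ⧸ I) ⟨_, Ideal.right_mem_span_pair _ _⟩ =
      Ideal.Quotient.mk I (valY3 k a) := by
  simp [homOfCoords, Ideal.liftSpanPair_right]

theorem homOfCoords_injective : Function.Injective (homOfCoords k) := by
  refine (injective_iff_map_eq_zero _).mpr fun a ha => ?_
  have hu : valXY2 k a ∈ I := by
    rw [← Ideal.Quotient.eq_zero_iff_mem, ← homOfCoords_apply_left, ha]
    rfl
  have hv : valY3 k a ∈ I := by
    rw [← Ideal.Quotient.eq_zero_iff_mem, ← homOfCoords_apply_right, ha]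
    rfl
  rw [← coords_val a, coords_eq_zero_of_mem hu hv]

theorem homOfCoords_surjective : Function.Surjective (homOfCoords k) := by
  rintro ⟨φ, hφ⟩
  obtain ⟨u, v, hu, hv, hr, hφu, hφv⟩ := exists_homogeneous_values hφ
  set a := coords u v
  have hdiff := mem_ideal_of_coords_eq_zero (hu.sub (isHomogeneous_valXY2 a))
    (hv.sub (isHomogeneous_valY3 a))
    (by convert Ideal.sub_mem _ hr (X_one_mul_valXY2_sub_mem a) using 1; ring)
    (by rw [coords_sub, coords_val, sub_self])
  refine ⟨a, Subtype.ext <| Ideal.linearMap_ext_span_pair ?_ ?_⟩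
  · rw [homOfCoords_apply_left, hφu, eq_comm, Ideal.Quotient.mk_eq_mk_iff_sub_mem]
    exact hdiff.1
  · rw [homOfCoords_apply_right, hφv, eq_comm, Ideal.Quotient.mk_eq_mk_iff_sub_mem]
    exact hdiff.2

end PlanarDoubleLine

theorem stmt_9_general (k : Type*) [Field k]
    (I' : Ideal (MvPolynomial (Fin 3) k))
    (hI' : I' = Ideal.span {X 0 * X 1 ^ 2, X 1 ^ 3}) :
    Module.finrank k (degreeZeroHoms k (Fin 3) I') = 7 := by
  subst hI'
  open PlanarDoubleLine in
  rw [← (LinearEquiv.ofBijective (homOfCoords k)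
      ⟨homOfCoords_injective, homOfCoords_surjective⟩).finrank_eq, Module.finrank_fin_fun]

/-- for `I' = (xy², y³)` in `S' = k[x, y, w]` (variables `x, y, w`
indexed by `0, 1, 2`), `char k = 0`, the degree-zero graded piece of
`Hom_{S'}(I'/I'², S'/I')` has `k`-dimension `7`. -/
theorem stmt_9 (k : Type*) [Field k] [CharZero k]
    (I' : Ideal (MvPolynomial (Fin 3) k))
    (hI' : I' = Ideal.span {X 0 * X 1 ^ 2, X 1 ^ 3}) :
    Module.finrank k (degreeZeroHoms k (Fin 3) I') = 7 :=
  stmt_9_general k I' hI'
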